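/- In the symmetric group, for j ≤ k − 1, k ≤ i and j < l, the block-crossings satisfy [i,j][k,l] = [k−1,l−1][i,j], where [i,j] = σ_i σ_{i-1} ··· σ_j. -/
import Mathlib


/-- The adjacent transposition `σ_i = (i, i+1)` in the symmetric group on `ℕ`
(the letters of interest being the positive natural numbers). -/
def sigmaPerm (i : ℕ) : Equiv.Perm ℕ := Equiv.swap i (i + 1)

/-- The block-crossing `[i,j] = σ_i σ_{i-1} ⋯ σ_j` (for `j ≤ i`), defined recursively by
`[j,j] = σ_j` and `[i,j] = σ_i · [i-1,j]`. -/
def blk (i j : ℕ) : Equiv.Perm ℕ :=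
  (((List.range' j (i + 1 - j)).reverse).map sigmaPerm).prod

lemma blk_succ (i j : ℕ) (h : j ≤ i + 1) :
    blk (i + 1) j = sigmaPerm (i + 1) * blk i j := by
  unfold blk
  have h1 : i + 1 + 1 - j = (i + 1 - j) + 1 := by omega
  have h2 : j + (i + 1 - j) = i + 1 := by omega
  rw [h1, List.range'_concat, List.reverse_append]
  simp [Nat.one_mul, h2]

lemma sigma_apply (i x : ℕ) :
    sigmaPerm i x = if x = i then i + 1 else if x = i + 1 then i else x := by
  unfold sigmaPerm
  rcases eq_or_ne x i with rfl | h1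
  · simp
  rcases eq_or_ne x (i + 1) with rfl | h2
  · simp
  · rw [Equiv.swap_apply_of_ne_of_ne h1 h2]; simp [h1, h2]

lemma blk_apply (i j : ℕ) (h : j ≤ i) (x : ℕ) :
    blk i j x = if x = j then i + 1 else if j < x ∧ x ≤ i + 1 then x - 1 else x := by
  induction i, h using Nat.le_induction with
  | base =>
    have : blk j j = sigmaPerm j := by
      unfold blk
      simp [Nat.succ_sub (le_refl j)]
    rw [this, sigma_apply]
    split_ifs <;> omega
  | succ n hn ih =>
    rw [blk_succ n j (by omega), Equiv.Perm.mul_apply, ih, sigma_apply]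
    split_ifs <;> omega

/-- For `j ≤ k - 1`, `k ≤ i` and `j < l` (with `l ≤ k`):
`[i,j][k,l] = [k-1,l-1][i,j]`. -/
theorem blk_exchange_lt (i j k l : ℕ) (hj : 1 ≤ j) (hjk : j + 1 ≤ k) (hki : k ≤ i)
    (hjl : j < l) (hlk : l ≤ k) :
    blk i j * blk k l = blk (k - 1) (l - 1) * blk i j := by
  ext x
  rw [Equiv.Perm.mul_apply, Equiv.Perm.mul_apply,
    blk_apply k l hlk, blk_apply i j (by omega),
    blk_apply i j (by omega), blk_apply (k - 1) (l - 1) (by omega)]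
  split_ifs <;> omega
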